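/- Let L₁ and L₂ be two distinct rooted trees each with ℓ vertices. Then for every n, the number of rooted trees on n vertices that do not contain L₁ as a limb equals the number of rooted trees on n vertices that do not contain L₂ as a limb. -/

import Mathlib

/-- A rooted tree: a root together with a list of rooted subtrees
(the list order is quotiented out by `Iso` below). -/
inductive RTree : Type
  | node : List RTree → RTree

mutual
  /-- The number of vertices of a rooted tree. -/
  def RTree.size : RTree → ℕ
    | .node c => 1 + RTree.sizeList c
  def RTree.sizeList : List RTree → ℕ
    | [] => 0
    | t :: ts => RTree.size t + RTree.sizeList ts
end

mutual
  /-- Isomorphism of rooted trees: the children correspond up to isomorphism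
  and permutation. -/
  inductive RTree.Iso : RTree → RTree → Prop
    | node (c c' l : List RTree) :
        l.Perm c' → RTree.IsoList c l → RTree.Iso (.node c) (.node c')
  inductive RTree.IsoList : List RTree → List RTree → Prop
    | nil : RTree.IsoList [] []
    | cons {t t' : RTree} {ts ts' : List RTree} :
        RTree.Iso t t' → RTree.IsoList ts ts' → RTree.IsoList (t :: ts) (t' :: ts')
end

/-- `HasLimb T L` says that the rooted tree `T` contains `L` as a limb: some vertex
`v` of `T` together with a collection of branches at `v` (i.e. `v` together with
the full subtrees of a submultiset of the children of `v`) is isomorphic to `L`. -/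
inductive HasLimb : RTree → RTree → Prop
  | here (c sub : List RTree) (L : RTree) :
      sub.Subperm c → RTree.Iso (.node sub) L → HasLimb (.node c) L
  | child (c : List RTree) (t L : RTree) :
      t ∈ c → HasLimb t L → HasLimb (.node c) L

/-!
A rooted tree up to isomorphism is the same as the multiset of the isomorphism classes of its
children, and a tree contains `L` as a limb iff its multiset of children contains that of `L`
or one of its children contains `L` as a limb. Writing `M_L(s)` for the number of multisets of
`L`-avoiding trees of total size `s`, the `L`-avoiding trees with `n + 1` vertices are thus
counted by `M_L(n) - M_L(n - (ℓ - 1))` (the second term only when `ℓ - 1 ≤ n`): adding the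
children of `L`, which avoid `L` since they are smaller, identifies the multisets of total size
`n - (ℓ - 1)` with those of total size `n` containing the children of `L`. Since `M_L(s)` only
depends on the numbers of `L`-avoiding trees of each size `≤ s`, strong induction on `n` shows
that these numbers depend on `L` only through `ℓ`.
-/

namespace Multiset

variable {α β γ : Type*}

theorem rel_coe_iff {r : α → β → Prop} {l : List α} {l' : List β} :
    Rel r (l : Multiset α) l' ↔ ∃ l'', List.Forall₂ r l l'' ∧ l''.Perm l' := by
  induction l generalizing l' with
  | nil => simp
  | cons a l ih =>
    rw [← cons_coe, rel_cons_left]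
    constructor
    · rintro ⟨b, bs, hab, hrel, hl'⟩
      obtain ⟨lb, rfl⟩ := Quot.exists_rep bs
      obtain ⟨l'', hr, hp⟩ := ih.1 hrel
      exact ⟨b :: l'', .cons hab hr, (hp.cons b).trans (Quotient.exact hl').symm⟩
    · rintro ⟨_ | ⟨b, l''⟩, hr, hp⟩
      · cases hr
      · obtain _ | ⟨hab, hr⟩ := hr
        exact ⟨b, l'', hab, ih.2 ⟨l'', hr, .refl _⟩, (Quot.sound hp).symm⟩

theorem Rel.comp {r : α → β → Prop} {r' : β → γ → Prop} {s : Multiset α} {t : Multiset β}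
    {u : Multiset γ} (h : Rel r s t) (h' : Rel r' t u) :
    Rel (Relation.Comp r r') s u := by
  induction h generalizing u with
  | zero => rw [rel_zero_left.mp h']; exact .zero
  | cons hab _ ih =>
    obtain ⟨c, cs, hbc, htu, rfl⟩ := rel_cons_left.mp h'
    exact .cons ⟨_, hab, hbc⟩ (ih htu)

theorem le_map_iff {f : α → β} {s : Multiset β} {t : Multiset α} :
    s ≤ t.map f ↔ ∃ u ≤ t, u.map f = s := by
  refine ⟨fun h => ?_, fun ⟨u, hu, hs⟩ => hs ▸ map_le_map hu⟩
  obtain ⟨ls, rfl⟩ := Quot.exists_rep s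
  obtain ⟨lt, rfl⟩ := Quot.exists_rep t
  obtain ⟨l, hp, hl⟩ := coe_le.mp h
  obtain ⟨lu, hu, rfl⟩ := List.sublist_map_iff.mp hl
  exact ⟨lu, coe_le.mpr hu.subperm, Quot.sound hp⟩

theorem sum_le_sum_of_le {M : Type*} [AddCommMonoid M] [PartialOrder M]
    [CanonicallyOrderedAdd M] {s t : Multiset M} (h : s ≤ t) : s.sum ≤ t.sum := by
  obtain ⟨u, rfl⟩ := le_iff_exists_add.mp h
  simp

theorem finite_setOf_sum_map_le {w : α → ℕ} {s : ℕ} (hw : ∀ a, 0 < w a)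
    (hs : {a | w a ≤ s}.Finite) : {m : Multiset α | (m.map w).sum ≤ s}.Finite := by
  classical
  -- such a multiset has at most `s` elements, all from the finite set `{a | w a ≤ s}`
  refine (Set.finite_Iic (s • hs.toFinset.val)).subset fun m hm => ?_
  rw [Set.mem_Iic, le_iff_count]
  intro a
  by_cases ha : a ∈ m
  · have hcard : card m ≤ s := by
      simpa using (card_nsmul_le_sum (s := m.map w) (a := 1) fun x hx => by
        obtain ⟨a, -, rfl⟩ := mem_map.mp hx
        exact hw a).trans hm
    have haw : w a ≤ s := (le_sum_of_mem (mem_map_of_mem w ha)).trans hm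
    rw [count_nsmul, count_eq_one_of_mem hs.toFinset.nodup (by simpa using haw)]
    simpa using (count_le_card a m).trans hcard
  · simp [count_eq_zero_of_notMem ha]

end Multiset

section WeightedMultisets

open Multiset

variable {α β γ : Type*}

def Equiv.multisetCongr (e : α ≃ β) : Multiset α ≃ Multiset β where
  toFun := map e
  invFun := map e.symm
  left_inv m := by simp [map_map]
  right_inv m := by simp [map_map]

def weightedMultisets (w : α → ℕ) (p : α → Prop) (s : ℕ) : Set (Multiset α) :=
  {m | (∀ x ∈ m, p x) ∧ (m.map w).sum = s}

variable {w : α → ℕ} {p : α → Prop} {v : β → ℕ} {q : β → Prop}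

theorem weightedMultisets_and_le (w : α → ℕ) (p : α → Prop) (s : ℕ) :
    weightedMultisets w (fun a => p a ∧ w a ≤ s) s = weightedMultisets w p s := by
  ext m
  refine ⟨fun ⟨hp, hs⟩ => ⟨fun x hx => (hp x hx).1, hs⟩,
    fun ⟨hp, hs⟩ =>
      ⟨fun x hx => ⟨hp x hx, hs ▸ le_sum_of_mem (mem_map_of_mem w hx)⟩, hs⟩⟩

theorem ncard_weightedMultisets_eq_card_subtype (w : α → ℕ) (p : α → Prop) (s : ℕ) :
    (weightedMultisets w p s).ncard =
      Nat.card {m : Multiset (Subtype p) // (m.map (w ∘ Subtype.val)).sum = s} := by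
  have : weightedMultisets w p s =
      map Subtype.val '' {m : Multiset (Subtype p) | (m.map (w ∘ Subtype.val)).sum = s} := by
    ext m
    refine ⟨fun ⟨hp, hs⟩ => ?_, ?_⟩
    · lift m to Multiset (Subtype p) using hp
      exact ⟨m, by simpa [map_map] using hs, rfl⟩
    · rintro ⟨m, hs, rfl⟩
      refine ⟨fun x hx => ?_, by simpa [map_map] using hs⟩
      obtain ⟨y, -, rfl⟩ := mem_map.mp hx
      exact y.2
  rw [this, Set.ncard_image_of_injective _ (map_injective Subtype.val_injective)]
  rfl

theorem exists_subtypeEquiv_of_ncard_fiber_eq {w : α → γ} {v : β → γ}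
    (hp : ∀ k, {a | p a ∧ w a = k}.Finite) (hq : ∀ k, {b | q b ∧ v b = k}.Finite)
    (h : ∀ k, {a | p a ∧ w a = k}.ncard = {b | q b ∧ v b = k}.ncard) :
    ∃ e : Subtype p ≃ Subtype q, ∀ a, v (e a) = w a := by
  have E (k : γ) : {a : Subtype p // w a = k} ≃ {b : Subtype q // v b = k} := by
    have := (hp k).to_subtype
    have := (hq k).to_subtype
    have hk : Nonempty ({a | p a ∧ w a = k} ≃ {b | q b ∧ v b = k}) := by
      rw [← Finite.card_eq, Nat.card_coe_set_eq, Nat.card_coe_set_eq, h]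
    exact (Equiv.subtypeSubtypeEquivSubtypeInter p (w · = k)).trans
      (hk.some.trans (Equiv.subtypeSubtypeEquivSubtypeInter q (v · = k)).symm)
  exact ⟨Equiv.ofFiberEquiv E, Equiv.ofFiberEquiv_map E⟩

theorem setOf_and_le_and_eq (w : α → ℕ) (p : α → Prop) (s k : ℕ) :
    {a | (p a ∧ w a ≤ s) ∧ w a = k} = if k ≤ s then {a | p a ∧ w a = k} else ∅ := by
  ext a
  split_ifs with hk
  · exact ⟨fun ⟨⟨ha, _⟩, hak⟩ => ⟨ha, hak⟩,
      fun ⟨ha, hak⟩ => ⟨⟨ha, hak ▸ hk⟩, hak⟩⟩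
  · exact ⟨fun ⟨⟨_, has⟩, hak⟩ => hk (hak ▸ has), False.elim⟩

theorem ncard_weightedMultisets_congr {s : ℕ}
    (hp : ∀ k ≤ s, {a | p a ∧ w a = k}.Finite)
    (hq : ∀ k ≤ s, {b | q b ∧ v b = k}.Finite)
    (h : ∀ k ≤ s, {a | p a ∧ w a = k}.ncard = {b | q b ∧ v b = k}.ncard) :
    (weightedMultisets w p s).ncard = (weightedMultisets v q s).ncard := by
  -- only elements of weight `≤ s` occur, and on those the fibres of `w` and `v` match
  obtain ⟨e, he⟩ := exists_subtypeEquiv_of_ncard_fiber_eq (w := w) (v := v)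
    (p := fun a => p a ∧ w a ≤ s) (q := fun b => q b ∧ v b ≤ s)
    (fun k => by rw [setOf_and_le_and_eq]; split_ifs with hk; exacts [hp k hk, Set.finite_empty])
    (fun k => by rw [setOf_and_le_and_eq]; split_ifs with hk; exacts [hq k hk, Set.finite_empty])
    (fun k => by
      rw [setOf_and_le_and_eq, setOf_and_le_and_eq]; split_ifs with hk; exacts [h k hk, by simp])
  rw [← weightedMultisets_and_le w p, ← weightedMultisets_and_le v q,
    ncard_weightedMultisets_eq_card_subtype, ncard_weightedMultisets_eq_card_subtype]
  exact Nat.card_congr (Equiv.subtypeEquiv (Equiv.multisetCongr e) fun m => by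
    simp [Equiv.multisetCongr, map_map, Function.comp_def, he])

theorem ncard_weightedMultisets_inter_le {c : Multiset α} (hc : ∀ x ∈ c, p x) (s : ℕ) :
    (weightedMultisets w p s ∩ {m | c ≤ m}).ncard =
      if (c.map w).sum ≤ s then (weightedMultisets w p (s - (c.map w).sum)).ncard else 0 := by
  classical
  split_ifs with hcs
  · have : weightedMultisets w p s ∩ {m | c ≤ m} =
        (· + c) '' weightedMultisets w p (s - (c.map w).sum) := by
      ext m
      constructor
      · rintro ⟨⟨hp, hs⟩, (hcm : c ≤ m)⟩
        refine ⟨m - c, ⟨fun x hx => hp x (mem_of_le (Multiset.sub_le_self _ _) hx), ?_⟩,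
          tsub_add_cancel_of_le hcm⟩
        have hm : ((m - c).map w).sum + (c.map w).sum = s := by
          rw [← sum_add, ← Multiset.map_add, tsub_add_cancel_of_le hcm, hs]
        omega
      · rintro ⟨m, ⟨hp, hs⟩, rfl⟩
        refine ⟨⟨fun x hx => (mem_add.mp hx).elim (hp x) (hc x), ?_⟩, le_add_left _ _⟩
        rw [Multiset.map_add, sum_add, hs]
        omega
    rw [this, Set.ncard_image_of_injective _ (add_left_injective c)]
  · convert Set.ncard_empty (Multiset α)
    refine Set.eq_empty_of_forall_notMem ?_
    rintro m ⟨⟨-, hs⟩, (hcm : c ≤ m)⟩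
    exact hcs (hs ▸ sum_le_sum_of_le (map_le_map hcm))

end WeightedMultisets

namespace RTree

def children : RTree → List RTree
  | node c => c

theorem size_node (c : List RTree) : (node c).size = 1 + (c.map size).sum := by
  have sizeList_eq (l : List RTree) : sizeList l = (l.map size).sum := by
    induction l with
    | nil => rw [sizeList]; rfl
    | cons t ts ih => rw [sizeList, ih, List.map_cons, List.sum_cons]
  rw [size, sizeList_eq]

theorem one_le_size (t : RTree) : 1 ≤ t.size := by
  cases t
  rw [size_node]
  omega

theorem size_lt_size_node {t : RTree} {c : List RTree} (ht : t ∈ c) :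
    t.size < (node c).size := by
  rw [size_node]
  have := List.le_sum_of_mem (List.mem_map_of_mem (f := size) ht)
  omega

theorem induction_node {P : RTree → Prop} (t : RTree)
    (node : ∀ c, (∀ t ∈ c, P t) → P (node c)) : P t :=
  RTree.rec (motive_2 := fun l => ∀ t ∈ l, P t) node (by simp)
    (fun _ _ ht hts => by simpa [ht] using hts) t

theorem iso_node_iff {c c' : List RTree} :
    Iso (node c) (node c') ↔ Multiset.Rel Iso (c : Multiset RTree) c' := by
  have isoList_iff {l l' : List RTree} : IsoList l l' ↔ List.Forall₂ Iso l l' := by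
    induction l generalizing l' with
    | nil => constructor <;> rintro ⟨⟩ <;> constructor
    | cons t ts ih =>
      constructor
      · rintro ⟨⟩; constructor <;> simp_all
      · rintro ⟨⟩; constructor <;> simp_all
  rw [Multiset.rel_coe_iff]
  constructor
  · rintro ⟨_, _, l, hp, hl⟩
    exact ⟨l, isoList_iff.mp hl, hp⟩
  · rintro ⟨l, hl, hp⟩
    exact .node c c' l hp (isoList_iff.mpr hl)

theorem Iso.refl (t : RTree) : Iso t t := by
  induction t using induction_node with
  | node c ih => exact iso_node_iff.mpr (Multiset.rel_refl_of_refl_on ih)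

theorem Iso.symm {t t' : RTree} : Iso t t' → Iso t' t := by
  induction t using induction_node generalizing t' with
  | node c ih =>
    obtain ⟨c'⟩ := t'
    simp only [iso_node_iff]
    exact fun h => Multiset.rel_flip.mp (h.mono fun a ha _ _ => ih a ha)

theorem Iso.trans {t t' t'' : RTree} : Iso t t' → Iso t' t'' → Iso t t'' := by
  induction t using induction_node generalizing t' t'' with
  | node c ih =>
    obtain ⟨c'⟩ := t'
    obtain ⟨c''⟩ := t''
    simp only [iso_node_iff]
    exact fun h h' => (h.comp h').mono fun a ha _ _ ⟨_, hab, hbc⟩ => ih a ha hab hbc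

instance setoid : Setoid RTree := ⟨Iso, ⟨Iso.refl, Iso.symm, Iso.trans⟩⟩

theorem Iso.size_eq {t t' : RTree} : Iso t t' → t.size = t'.size := by
  induction t using induction_node generalizing t' with
  | node c ih =>
    obtain ⟨c'⟩ := t'
    intro h
    have : (c : Multiset RTree).map size = (c' : Multiset RTree).map size :=
      Multiset.rel_eq.mp <| Multiset.rel_map.mpr <|
        (iso_node_iff.mp h).mono fun a ha _ _ => ih a ha
    rw [size_node, size_node, ← Multiset.sum_coe, ← Multiset.sum_coe, ← Multiset.map_coe,
      ← Multiset.map_coe, this]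

theorem iso_node_iff_map_mk {c c' : List RTree} :
    Iso (node c) (node c') ↔
      (c : Multiset RTree).map (Quotient.mk setoid) =
        (c' : Multiset RTree).map (Quotient.mk setoid) := by
  rw [iso_node_iff, ← Multiset.rel_eq, Multiset.rel_map]
  exact ⟨fun h => h.mono fun _ _ _ _ h => Quotient.sound h,
    fun h => h.mono fun _ _ _ _ => Quotient.exact⟩

theorem hasLimb_node_iff {c : List RTree} {L : RTree} :
    HasLimb (node c) L ↔
      (L.children : Multiset RTree).map (Quotient.mk setoid) ≤
          (c : Multiset RTree).map (Quotient.mk setoid) ∨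
        ∃ t ∈ c, HasLimb t L := by
  obtain ⟨cl⟩ := L
  constructor
  · rintro (⟨_, sub, _, hsub, hiso⟩ | ⟨_, t, _, ht, h⟩)
    · exact .inl (iso_node_iff_map_mk.mp hiso ▸ Multiset.map_le_map (Multiset.coe_le.mpr hsub))
    · exact .inr ⟨t, ht, h⟩
  · rintro (h | ⟨t, ht, h⟩)
    · obtain ⟨u, hu, hmap⟩ := Multiset.le_map_iff.mp h
      obtain ⟨sub, rfl⟩ := Quot.exists_rep u
      exact .here c sub _ (Multiset.coe_le.mp hu) (iso_node_iff_map_mk.mpr hmap)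
    · exact .child c t _ ht h

end RTree

open RTree in
theorem HasLimb.of_iso {T T' L : RTree} (hT : Iso T T') (h : HasLimb T L) : HasLimb T' L := by
  induction T using RTree.induction_node generalizing T' with
  | node c ih =>
    obtain ⟨c'⟩ := T'
    rcases hasLimb_node_iff.mp h with h | ⟨t, ht, h⟩
    · exact hasLimb_node_iff.mpr (.inl (iso_node_iff_map_mk.mp hT ▸ h))
    · obtain ⟨t', ht', htt'⟩ := Multiset.exists_mem_of_rel_of_mem (iso_node_iff.mp hT) ht
      exact hasLimb_node_iff.mpr (.inr ⟨t', ht', ih t ht htt' h⟩)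

open RTree in
theorem HasLimb.size_le {T L : RTree} (h : HasLimb T L) : L.size ≤ T.size := by
  induction h with
  | here c sub L hsub hiso =>
    have := Multiset.sum_le_sum_of_le
      (Multiset.map_le_map (f := size) (Multiset.coe_le.mpr hsub))
    rw [← hiso.size_eq, size_node, size_node]
    simp only [Multiset.map_coe, Multiset.sum_coe] at this
    omega
  | child c t L ht _ ih =>
    have := size_lt_size_node ht
    omega

abbrev RTreeClass : Type := Quotient RTree.setoid

namespace RTreeClass

def size : RTreeClass → ℕ := Quotient.lift RTree.size fun _ _ => RTree.Iso.size_eq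

def children : RTreeClass → Multiset RTreeClass :=
  Quotient.lift (fun t => (t.children : Multiset RTree).map (⟦·⟧)) fun ⟨_⟩ ⟨_⟩ h =>
    RTree.iso_node_iff_map_mk.mp h

def HasLimb (q : RTreeClass) (L : RTree) : Prop :=
  Quotient.liftOn q (_root_.HasLimb · L) fun _ _ h => propext ⟨.of_iso h, .of_iso h.symm⟩

@[simp] theorem size_mk (t : RTree) : size ⟦t⟧ = t.size := rfl

@[simp] theorem hasLimb_mk (t L : RTree) : HasLimb ⟦t⟧ L ↔ _root_.HasLimb t L := Iff.rfl

theorem children_mk_node (c : List RTree) :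
    children (⟦.node c⟧ : RTreeClass) = (c : Multiset RTree).map (⟦·⟧) := rfl

theorem one_le_size (q : RTreeClass) : 1 ≤ q.size := by
  obtain ⟨t⟩ := q
  exact t.one_le_size

theorem size_eq (q : RTreeClass) : q.size = 1 + (q.children.map size).sum := by
  induction q using Quotient.ind with | _ t => ?_
  obtain ⟨c⟩ := t
  simp [children_mk_node, RTree.size_node, Function.comp_def]

theorem children_bijective : Function.Bijective children := by
  constructor
  · rintro ⟨⟨c⟩⟩ ⟨⟨c'⟩⟩ h
    exact Quotient.sound (RTree.iso_node_iff_map_mk.mpr h)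
  · intro m
    obtain ⟨u, rfl⟩ := Multiset.exists_multiset_eq_map_quot_mk m
    obtain ⟨c, rfl⟩ := Quot.exists_rep u
    exact ⟨⟦.node c⟧, rfl⟩

theorem hasLimb_iff {q : RTreeClass} {L : RTree} :
    q.HasLimb L ↔
      children (⟦L⟧ : RTreeClass) ≤ q.children ∨ ∃ x ∈ q.children, x.HasLimb L := by
  induction q using Quotient.ind with | _ t => ?_
  obtain ⟨c⟩ := t
  obtain ⟨cl⟩ := L
  simp [RTree.hasLimb_node_iff, children_mk_node, RTree.children]

theorem HasLimb.size_le {q : RTreeClass} {L : RTree} (h : q.HasLimb L) : L.size ≤ q.size := by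
  obtain ⟨t⟩ := q
  exact _root_.HasLimb.size_le h

theorem finite_setOf_size_le (k : ℕ) : {q : RTreeClass | q.size ≤ k}.Finite := by
  induction k with
  | zero =>
    refine Set.finite_empty.subset fun q hq => ?_
    have := q.one_le_size
    simp_all
  | succ k ih =>
    refine ((Multiset.finite_setOf_sum_map_le one_le_size ih).preimage
      children_bijective.1.injOn).subset fun q hq => ?_
    have := size_eq q
    simp_all
    omega

def avoiding (L : RTree) (n : ℕ) : Set RTreeClass := {q | ¬ q.HasLimb L ∧ q.size = n}

theorem finite_avoiding (L : RTree) (n : ℕ) : (avoiding L n).Finite :=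
  (finite_setOf_size_le n).subset fun _ hq => hq.2.le

theorem sum_map_size_children (q : RTreeClass) : (q.children.map size).sum = q.size - 1 := by
  have := size_eq q
  omega

theorem not_hasLimb_of_mem_children {L : RTree} {x : RTreeClass}
    (hx : x ∈ children (⟦L⟧ : RTreeClass)) : ¬ x.HasLimb L := fun h => by
  have := Multiset.le_sum_of_mem (Multiset.mem_map_of_mem size hx)
  have := sum_map_size_children ⟦L⟧
  have := h.size_le
  have := L.one_le_size
  simp_all
  omega

theorem avoiding_succ (L : RTree) (n : ℕ) :
    avoiding L (n + 1) = children ⁻¹'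
      (weightedMultisets size (¬ ·.HasLimb L) n \
        {m | children (⟦L⟧ : RTreeClass) ≤ m}) := by
  ext q
  simp only [avoiding, weightedMultisets, Set.mem_ofPred_eq, Set.mem_preimage, Set.mem_sdiff]
  rw [hasLimb_iff, size_eq q]
  push Not
  rw [add_comm, Nat.add_right_cancel_iff]
  tauto

theorem ncard_avoiding_succ (L : RTree) (n : ℕ) :
    (avoiding L (n + 1)).ncard = (weightedMultisets size (¬ ·.HasLimb L) n).ncard -
      if L.size - 1 ≤ n then
        (weightedMultisets size (¬ ·.HasLimb L) (n - (L.size - 1))).ncard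
      else 0 := by
  have hW : (weightedMultisets size (¬ ·.HasLimb L) n).Finite :=
    (Multiset.finite_setOf_sum_map_le one_le_size (finite_setOf_size_le n)).subset
      fun _ hm => hm.2.le
  have hL : L.size - 1 = ((children (⟦L⟧ : RTreeClass)).map size).sum :=
    (sum_map_size_children ⟦L⟧).symm
  rw [avoiding_succ, Set.ncard_preimage_of_injective_subset_range children_bijective.1
      (by simp [children_bijective.2.range_eq]),
    hL, ← ncard_weightedMultisets_inter_le fun _ => not_hasLimb_of_mem_children,
    ← Set.ncard_inter_add_ncard_sdiff_eq_ncard _ {m | children (⟦L⟧ : RTreeClass) ≤ m} hW]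
  omega

theorem ncard_avoiding_eq_of_size_eq {L₁ L₂ : RTree} (hL : L₁.size = L₂.size) (n : ℕ) :
    (avoiding L₁ n).ncard = (avoiding L₂ n).ncard := by
  induction n using Nat.strong_induction_on with
  | _ n ih =>
  obtain _ | n := n
  · have (L : RTree) : avoiding L 0 = ∅ :=
      Set.eq_empty_of_forall_notMem fun q hq => by have := q.one_le_size; simp_all [avoiding]
    rw [this L₁, this L₂]
  · have hW (s : ℕ) (hs : s ≤ n) :
        (weightedMultisets size (¬ ·.HasLimb L₁) s).ncard =
          (weightedMultisets size (¬ ·.HasLimb L₂) s).ncard :=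
      ncard_weightedMultisets_congr (fun k _ => finite_avoiding L₁ k)
        (fun k _ => finite_avoiding L₂ k) fun k hk => ih k (by omega)
    rw [ncard_avoiding_succ, ncard_avoiding_succ, hL, hW n le_rfl]
    split_ifs
    · rw [hW _ (Nat.sub_le _ _)]
    · rfl

theorem card_quot_iso_eq_ncard_avoiding (L : RTree) (n : ℕ) :
    Nat.card (Quot (fun a b : {t : RTree // t.size = n ∧ ¬ _root_.HasLimb t L} =>
      RTree.Iso a.1 b.1)) = (avoiding L n).ncard := by
  rw [← Nat.card_coe_set_eq]
  refine Nat.card_eq_of_bijective (Quot.lift (fun t => ⟨⟦t.1⟧, t.2.2, t.2.1⟩)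
    fun _ _ h => Subtype.ext (Quotient.sound (s := RTree.setoid) h)) ⟨?_, ?_⟩
  · rintro ⟨a⟩ ⟨b⟩ h
    exact Quot.sound (Quotient.exact (congrArg Subtype.val h))
  · rintro ⟨⟨t⟩, ht, hn⟩
    exact ⟨Quot.mk _ ⟨t, hn, ht⟩, rfl⟩

end RTreeClass

/-- If `L₁` and `L₂` are two distinct rooted trees with `ℓ` vertices, then for every
`n` the number of `n`-vertex rooted trees (up to isomorphism) without `L₁` as a limb
equals the number of `n`-vertex rooted trees without `L₂` as a limb. -/
theorem stmt18 (ℓ n : ℕ) (L₁ L₂ : RTree) (h1 : L₁.size = ℓ) (h2 : L₂.size = ℓ)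
    (hne : ¬ RTree.Iso L₁ L₂) :
    Nat.card (Quot (fun a b : {t : RTree // t.size = n ∧ ¬ HasLimb t L₁} =>
      RTree.Iso a.1 b.1)) =
    Nat.card (Quot (fun a b : {t : RTree // t.size = n ∧ ¬ HasLimb t L₂} =>
      RTree.Iso a.1 b.1)) := by
  rw [RTreeClass.card_quot_iso_eq_ncard_avoiding, RTreeClass.card_quot_iso_eq_ncard_avoiding]
  exact RTreeClass.ncard_avoiding_eq_of_size_eq (h1.trans h2.symm) n
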